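/- Let m > 0, B(p) = bp² with b ∈ ℝ∖{0}, W± as above, and S := (W⁺)*W⁻. Then (Sf)(q,p) = f(q,p) − (f(q,p) − f(−q,−p))/(1 − 2i|p|/(mB(p))) for a.e. (q,p), and S W⁺ f = W⁻ f for all f ∈ L²(ℝ²). -/

import Mathlib

open MeasureTheory

/-- Heaviside step function: `1` for positive arguments, `0` otherwise. -/
noncomputable def heaviside (x : ℝ) : ℝ := if 0 < x then 1 else 0

/-- The classical wave operator `W^ε` (`ε = 1` for `W⁺`, `ε = -1` for `W⁻`), for `B(p) = b p²`. -/
noncomputable def Wcl (m b ε : ℝ) (f : ℝ × ℝ → ℂ) : ℝ × ℝ → ℂ :=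
  fun z =>
    f z - (((heaviside (-ε * (z.1 * z.2)) : ℝ) : ℂ)
        / (1 + (ε : ℂ) * (2 * Complex.I * ((|z.2| : ℝ) : ℂ)) / ((m : ℂ) * (b : ℂ) * (z.2 : ℂ) ^ 2)))
      * (f z - f (-z.1, -z.2))

/-- The adjoint `(W^ε)*` of the classical wave operator. -/
noncomputable def WclStar (m b ε : ℝ) (f : ℝ × ℝ → ℂ) : ℝ × ℝ → ℂ :=
  fun z =>
    f z - (((heaviside (-ε * (z.1 * z.2)) : ℝ) : ℂ)
        / (1 - (ε : ℂ) * (2 * Complex.I * ((|z.2| : ℝ) : ℂ)) / ((m : ℂ) * (b : ℂ) * (z.2 : ℂ) ^ 2)))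
      * (f z - f (-z.1, -z.2))

/-- The classical scattering operator `S := (W⁺)* W⁻`. -/
noncomputable def Scl (m b : ℝ) (f : ℝ × ℝ → ℂ) : ℝ × ℝ → ℂ :=
  WclStar m b 1 (Wcl m b (-1) f)

/-!
Everything is pointwise in `z = (q, p)`. Write `w = 2i|p|/(m B(p))` and `f_odd(z) = f z - f(-z)`:
`W^ε` and `(W^ε)*` are the identity where `ε q p ≥ 0`, and subtract `f_odd/(1 ± ε w)` where
`ε q p < 0`. Hence off the null set `{q p = 0}` exactly one factor of `S = (W⁺)* W⁻` acts,
giving the a.e. formula. For `S W⁺ f` with `q p < 0`, the odd part of `W⁺ f` is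
`(w - 1)/(w + 1) · f_odd`, and the two corrections cancel because `w` is purely imaginary, so
`1 ± w ≠ 0`.
-/

lemma heaviside_of_pos {x : ℝ} (hx : 0 < x) : heaviside x = 1 := if_pos hx

lemma heaviside_of_nonpos {x : ℝ} (hx : x ≤ 0) : heaviside x = 0 := if_neg hx.not_gt

/-- `w = 2i|p|/(m B(p))` for `B(p) = b p²`. -/
noncomputable def coupling (m b p : ℝ) : ℂ :=
  2 * Complex.I * ((|p| : ℝ) : ℂ) / ((m : ℂ) * (b : ℂ) * (p : ℂ) ^ 2)

lemma coupling_neg (m b p : ℝ) : coupling m b (-p) = coupling m b p := by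
  simp [coupling]

lemma re_coupling (m b p : ℝ) : (coupling m b p).re = 0 := by
  have : coupling m b p = Complex.I * ((2 * |p| / (m * b * p ^ 2) : ℝ) : ℂ) := by
    push_cast [coupling]; ring
  rw [this, Complex.I_mul_re, Complex.ofReal_im, neg_zero]

lemma Complex.one_add_ne_zero_of_re_eq_zero {w : ℂ} (hw : w.re = 0) : 1 + w ≠ 0 := fun h => by
  simpa [hw] using congrArg Complex.re h

lemma Complex.one_sub_ne_zero_of_re_eq_zero {w : ℂ} (hw : w.re = 0) : 1 - w ≠ 0 := fun h => by
  simpa [hw] using congrArg Complex.re h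

section Pointwise

variable (m b ε : ℝ) (f : ℝ × ℝ → ℂ) {z : ℝ × ℝ}

lemma Wcl_apply_of_nonneg (h : 0 ≤ ε * (z.1 * z.2)) : Wcl m b ε f z = f z := by
  simp only [Wcl, heaviside_of_nonpos (by linarith : -ε * (z.1 * z.2) ≤ 0), Complex.ofReal_zero,
    zero_div, zero_mul, sub_zero]

lemma WclStar_apply_of_nonneg (h : 0 ≤ ε * (z.1 * z.2)) : WclStar m b ε f z = f z := by
  simp only [WclStar, heaviside_of_nonpos (by linarith : -ε * (z.1 * z.2) ≤ 0), Complex.ofReal_zero,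
    zero_div, zero_mul, sub_zero]

lemma Wcl_apply_of_neg (h : ε * (z.1 * z.2) < 0) :
    Wcl m b ε f z = f z - (f z - f (-z.1, -z.2)) / (1 + ε * coupling m b z.2) := by
  simp only [Wcl, coupling, heaviside_of_pos (by linarith : 0 < -ε * (z.1 * z.2)),
    Complex.ofReal_one]
  ring

lemma WclStar_apply_of_neg (h : ε * (z.1 * z.2) < 0) :
    WclStar m b ε f z = f z - (f z - f (-z.1, -z.2)) / (1 - ε * coupling m b z.2) := by
  simp only [WclStar, coupling, heaviside_of_pos (by linarith : 0 < -ε * (z.1 * z.2)),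
    Complex.ofReal_one]
  ring

lemma Wcl_apply_congr {g : ℝ × ℝ → ℂ} (h : f z = g z) (h' : f (-z.1, -z.2) = g (-z.1, -z.2)) :
    Wcl m b ε f z = Wcl m b ε g z := by
  simp only [Wcl, h, h']

end Pointwise

lemma Scl_apply_of_mul_ne_zero (m b : ℝ) (f : ℝ × ℝ → ℂ) {z : ℝ × ℝ} (hz : z.1 * z.2 ≠ 0) :
    Scl m b f z = f z - (f z - f (-z.1, -z.2)) / (1 - coupling m b z.2) := by
  rcases hz.lt_or_gt with hneg | hpos
  · rw [Scl, WclStar_apply_of_neg m b 1 _ (by linarith),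
      Wcl_apply_of_nonneg m b (-1) f (by linarith),
      Wcl_apply_of_nonneg m b (-1) f (z := (-z.1, -z.2)) (by simp; linarith)]
    simp
  · rw [Scl, WclStar_apply_of_nonneg m b 1 _ (by linarith),
      Wcl_apply_of_neg m b (-1) f (by linarith)]
    simp [sub_eq_add_neg]

lemma Scl_Wcl_one_apply (m b : ℝ) (f : ℝ × ℝ → ℂ) (z : ℝ × ℝ) :
    Scl m b (Wcl m b 1 f) z = Wcl m b (-1) f z := by
  rcases le_or_gt 0 (z.1 * z.2) with hnonneg | hneg
  · rw [Scl, WclStar_apply_of_nonneg m b 1 _ (by linarith)]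
    exact Wcl_apply_congr m b (-1) _ (Wcl_apply_of_nonneg m b 1 f (by linarith))
      (Wcl_apply_of_nonneg m b 1 f (by simpa using hnonneg))
  · have hz' : (1 : ℝ) * ((-z.1) * (-z.2)) < 0 := by simpa using hneg
    have h1 := Complex.one_add_ne_zero_of_re_eq_zero (re_coupling m b z.2)
    have h2 := Complex.one_sub_ne_zero_of_re_eq_zero (re_coupling m b z.2)
    rw [Scl, WclStar_apply_of_neg m b 1 _ (by linarith),
      Wcl_apply_of_nonneg m b (-1) _ (by linarith),
      Wcl_apply_of_nonneg m b (-1) _ (z := (-z.1, -z.2)) (by simp; linarith),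
      Wcl_apply_of_neg m b 1 f (by linarith), Wcl_apply_of_neg m b 1 f hz',
      Wcl_apply_of_nonneg m b (-1) f (by linarith)]
    simp only [neg_neg, coupling_neg, Complex.ofReal_one, one_mul]
    field_simp
    ring

lemma ae_fst_mul_snd_ne_zero : ∀ᵐ z : ℝ × ℝ, z.1 * z.2 ≠ 0 := by
  have h := Measure.ae_ne (volume : Measure ℝ) 0
  filter_upwards [(Measure.quasiMeasurePreserving_fst (ν := (volume : Measure ℝ))).ae h,
    (Measure.quasiMeasurePreserving_snd (μ := (volume : Measure ℝ))).ae h] with z h1 h2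
  exact mul_ne_zero h1 h2

theorem stmt14_general (m b : ℝ) :
    (∀ f : ℝ × ℝ → ℂ,
      Scl m b f =ᵐ[volume] fun z : ℝ × ℝ =>
        f z - (f z - f (-z.1, -z.2))
          / (1 - (2 * Complex.I * ((|z.2| : ℝ) : ℂ)) / ((m : ℂ) * (b : ℂ) * (z.2 : ℂ) ^ 2))) ∧
    (∀ f : ℝ × ℝ → ℂ, ∀ z : ℝ × ℝ, Scl m b (Wcl m b 1 f) z = Wcl m b (-1) f z) :=
  ⟨fun f => ae_fst_mul_snd_ne_zero.mono fun _ hz => Scl_apply_of_mul_ne_zero m b f hz,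
    Scl_Wcl_one_apply m b⟩

theorem stmt14 (m b : ℝ) (hm : 0 < m) (hb : b ≠ 0) :
    (∀ f : ℝ × ℝ → ℂ,
      Scl m b f =ᵐ[volume] fun z : ℝ × ℝ =>
        f z - (f z - f (-z.1, -z.2))
          / (1 - (2 * Complex.I * ((|z.2| : ℝ) : ℂ)) / ((m : ℂ) * (b : ℂ) * (z.2 : ℂ) ^ 2))) ∧
    (∀ f : ℝ × ℝ → ℂ, ∀ z : ℝ × ℝ, Scl m b (Wcl m b 1 f) z = Wcl m b (-1) f z) :=
  stmt14_general m b
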